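/- arXiv:1405.1360 — 5 statements merged into one kernel-verified Lean document; each statement's English description precedes it below -/
import Mathlib

section
/- Let n > 0, K ≥ 2, and 0 < p_min < 1. Suppose γ ≤ 1/p_min and γ > 1, and let 0 < p ≤ 1 with p·γ ≤ 1. If √(n·p)·(γ-1)/√(γ - p) ≥ K, then p ≥ K²·p_min / (n·(1 - p_min)² + K²·p_min²). -/
set_option maxHeartbeats 800000


/-- Safe minimum frequency threshold: a rule significant at level `K` must have
frequency at least `K²·p_min/(n(1-p_min)² + K²·p_min²)`. -/
theorem safe_min_frequency (n K pmin γ p : ℝ)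
    (hn : 0 < n) (hK : 2 ≤ K) (hpmin : 0 < pmin) (hpmin1 : pmin < 1)
    (hγub : γ ≤ 1 / pmin) (hγ : 1 < γ)
    (hp : 0 < p) (hp1 : p ≤ 1) (hpγ : p * γ ≤ 1)
    (ht : Real.sqrt (n * p) * (γ - 1) / Real.sqrt (γ - p) ≥ K) :
    p ≥ K ^ 2 * pmin / (n * (1 - pmin) ^ 2 + K ^ 2 * pmin ^ 2) := by
  have hγp : 0 < γ - p := by nlinarith
  have hK0 : (0:ℝ) < K := by linarith
  have hs2 : (0:ℝ) < Real.sqrt (γ - p) := Real.sqrt_pos.mpr hγp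
  have h0 : K * Real.sqrt (γ - p) ≤ Real.sqrt (n * p) * (γ - 1) :=
    (le_div_iff₀ hs2).mp ht
  have hnp : (0:ℝ) ≤ n * p := by positivity
  have hKs2 : (0:ℝ) ≤ K * Real.sqrt (γ - p) := by positivity
  have hsq : (K * Real.sqrt (γ - p))^2 ≤ (Real.sqrt (n * p) * (γ - 1))^2 :=
    pow_le_pow_left₀ hKs2 h0 2
  have h1 : K^2 * (γ - p) ≤ n * p * (γ - 1)^2 := by
    have e1 : Real.sqrt (n * p) ^ 2 = n * p := Real.sq_sqrt hnp
    have e2 : Real.sqrt (γ - p) ^ 2 = γ - p := Real.sq_sqrt hγp.le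
    calc K^2 * (γ - p) = K^2 * Real.sqrt (γ - p)^2 := by rw [e2]
      _ = (K * Real.sqrt (γ - p))^2 := by ring
      _ ≤ (Real.sqrt (n * p) * (γ - 1))^2 := hsq
      _ = Real.sqrt (n * p)^2 * (γ - 1)^2 := by ring
      _ = n * p * (γ - 1)^2 := by rw [e1]
  have haγ : pmin * γ ≤ 1 := by
    have := (le_div_iff₀ hpmin).mp hγub
    linarith
  -- n(γ-1) ≥ K²
  have h2 : K^2 ≤ n * (γ - 1) := by
    nlinarith [mul_pos hn hp, sq_nonneg (γ - 1), mul_le_mul_of_nonneg_left hpγ hn.le]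
  set E := n * (γ - 1)^2 + K^2 with hE
  set D := n * (1 - pmin)^2 + K^2 * pmin^2 with hD
  have hDpos : 0 < D := by
    have h : 0 < (1 - pmin)^2 := pow_pos (by linarith) 2
    have hK2 : 0 < K^2 := pow_pos hK0 2
    simp only [hD]
    nlinarith [sq_nonneg pmin]
  have hEpos : 0 < E := by positivity
  have h3 : K^2 * γ ≤ p * E := by
    simp only [hE]; nlinarith [h1]
  have h2' : 0 ≤ n * (γ - pmin) - K^2 * pmin := by nlinarith
  have h1maγ : 0 ≤ 1 - pmin * γ := by linarith
  have key : γ * D - pmin * E = (1 - pmin * γ) * (n * (γ - pmin) - K^2 * pmin) := by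
    simp only [hE, hD]; ring
  have h4 : pmin * E ≤ γ * D := by
    have := mul_nonneg h1maγ h2'
    linarith [key]
  rw [ge_iff_le, div_le_iff₀ hDpos]
  have h5 : K^2 * γ * D ≤ p * E * D := mul_le_mul_of_nonneg_right h3 hDpos.le
  have h6 : K^2 * (pmin * E) ≤ K^2 * (γ * D) := mul_le_mul_of_nonneg_left h4 (sq_nonneg K)
  nlinarith [h5, h6, hEpos]
end

section
/- Let 0 < P(Z) < 1, 0 < P(Q|Z) ≤ 1, 0 < P(Y) < 1, with P(X) = P(Z)·P(Q|Z), and assume P(Y|Z) > P(Y), P(Y|X) > P(Y), P(X)·P(Y) < 1, P(Z)·P(Y) < 1. Then t(X→Y) > t(Z→Y) if and only if (P(Y|X) - P(Y)) / (P(Y|Z) - P(Y)) > √(1 - P(X)P(Y)) / √(P(Q|Z)·(1 - P(Z)P(Y))). -/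
lemma sqrt_div_lt_aux (u v a b : ℝ) (hu : 0 < u) (hv : 0 < v) (ha : 0 < a) (hb : 0 < b) :
    u / Real.sqrt a > v / Real.sqrt b ↔ u ^ 2 * b > v ^ 2 * a := by
  rw [gt_iff_lt, div_lt_div_iff₀ (Real.sqrt_pos.mpr hb) (Real.sqrt_pos.mpr ha),
    show v * Real.sqrt a = Real.sqrt (v ^ 2 * a) by
      rw [Real.sqrt_mul (by positivity), Real.sqrt_sq hv.le],
    show u * Real.sqrt b = Real.sqrt (u ^ 2 * b) by
      rw [Real.sqrt_mul (by positivity), Real.sqrt_sq hu.le],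
    Real.sqrt_lt_sqrt_iff (by positivity), gt_iff_lt]

/-- Superiority criterion: `t(X→Y) > t(Z→Y)` iff
`(P(Y|X)-P(Y))/(P(Y|Z)-P(Y)) > √(1-P(X)P(Y))/√(P(Q|Z)(1-P(Z)P(Y)))`. -/
theorem superiority_iff (n pZ q pY cX cZ : ℝ)
    (hn : 0 < n) (hZ : 0 < pZ) (hZ1 : pZ < 1) (hq : 0 < q) (hq1 : q ≤ 1)
    (hY : 0 < pY) (hY1 : pY < 1)
    (hcZ : cZ > pY) (hcX : cX > pY)
    (hXY : (pZ * q) * pY < 1) (hZY : pZ * pY < 1) :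
    (Real.sqrt n * ((pZ * q) * (cX - pY)) /
        Real.sqrt ((pZ * q) * pY * (1 - (pZ * q) * pY))
      > Real.sqrt n * (pZ * (cZ - pY)) / Real.sqrt (pZ * pY * (1 - pZ * pY)))
    ↔ (cX - pY) / (cZ - pY)
        > Real.sqrt (1 - (pZ * q) * pY) / Real.sqrt (q * (1 - pZ * pY)) := by
  have hx : 0 < cX - pY := sub_pos.mpr hcX
  have hz : 0 < cZ - pY := sub_pos.mpr hcZ
  have hr : 0 < 1 - pZ * q * pY := by linarith
  have hs' : 0 < 1 - pZ * pY := by linarith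
  have hs : 0 < q * (1 - pZ * pY) := by positivity
  have hk : 0 < n * pZ ^ 3 * pY * q := by positivity
  simp only [gt_iff_lt]
  rw [← gt_iff_lt, sqrt_div_lt_aux _ _ _ _
      (mul_pos (Real.sqrt_pos.mpr hn) (mul_pos (mul_pos hZ hq) hx))
      (mul_pos (Real.sqrt_pos.mpr hn) (mul_pos hZ hz))
      (by positivity) (by positivity),
    show Real.sqrt (1 - pZ * q * pY) / Real.sqrt (q * (1 - pZ * pY))
        = Real.sqrt ((1 - pZ * q * pY) / (q * (1 - pZ * pY))) from
      (Real.sqrt_div hr.le _).symm,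
    Real.sqrt_lt' (div_pos hx hz), div_pow,
    div_lt_div_iff₀ hs (by positivity),
    show (Real.sqrt n * (pZ * q * (cX - pY))) ^ 2 * (pZ * pY * (1 - pZ * pY))
        = (n * pZ ^ 3 * pY * q) * ((cX - pY) ^ 2 * (q * (1 - pZ * pY))) by
      rw [mul_pow, Real.sq_sqrt hn.le]; ring,
    show (Real.sqrt n * (pZ * (cZ - pY))) ^ 2 * (pZ * q * pY * (1 - pZ * q * pY))
        = (n * pZ ^ 3 * pY * q) * ((1 - pZ * q * pY) * (cZ - pY) ^ 2) by
      rw [mul_pow, Real.sq_sqrt hn.le]; ring]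
  exact mul_lt_mul_iff_right₀ hk
end

section
/- Under the assumptions of the superiority criterion (P(X) = P(Z)·P(Q|Z), 0 < P(Q|Z) ≤ 1, P(Y|Z) > P(Y), P(X)P(Y) < 1, P(Z)P(Y) < 1, probabilities in (0,1), n > 0): if t(X→Y) > t(Z→Y) then P(Y|X) > P(Y|Z), hence the improvement imp(X→Y) = cf(X→Y) - cf(Z→Y) is strictly positive. -/
/-- If `t(X→Y) > t(Z→Y)` then `P(Y|X) > P(Y|Z)`, i.e. the improvement
`imp(X→Y) = cf(X→Y) - cf(Z→Y)` is strictly positive. -/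
theorem superiority_implies_improvement (n pZ q pY cX cZ : ℝ)
    (hn : 0 < n) (hZ : 0 < pZ) (hZ1 : pZ < 1) (hq : 0 < q) (hq1 : q ≤ 1)
    (hY : 0 < pY) (hY1 : pY < 1)
    (hcZ : cZ > pY)
    (hXY : (pZ * q) * pY < 1) (hZY : pZ * pY < 1)
    (ht : Real.sqrt n * ((pZ * q) * (cX - pY)) /
        Real.sqrt ((pZ * q) * pY * (1 - (pZ * q) * pY))
      > Real.sqrt n * (pZ * (cZ - pY)) / Real.sqrt (pZ * pY * (1 - pZ * pY))) :
    cX > cZ ∧ cX - cZ > 0 := by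
  have hsn : 0 < Real.sqrt n := Real.sqrt_pos.mpr hn
  have h1pos : 0 < (pZ * q) * pY * (1 - (pZ * q) * pY) := by
    have : 0 < 1 - (pZ * q) * pY := by linarith
    have : 0 < (pZ * q) * pY := by positivity
    nlinarith
  have h2pos : 0 < pZ * pY * (1 - pZ * pY) := by
    have : 0 < 1 - pZ * pY := by linarith
    have : 0 < pZ * pY := by positivity
    nlinarith
  set D1 := Real.sqrt ((pZ * q) * pY * (1 - (pZ * q) * pY)) with hD1def
  set D2 := Real.sqrt (pZ * pY * (1 - pZ * pY)) with hD2def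
  have hD1 : 0 < D1 := Real.sqrt_pos.mpr h1pos
  have hD2 : 0 < D2 := Real.sqrt_pos.mpr h2pos
  -- key: q * D2 ≤ D1
  have hqD : q * D2 ≤ D1 := by
    have h1 : q * D2 = Real.sqrt (q ^ 2 * (pZ * pY * (1 - pZ * pY))) := by
      rw [hD2def, Real.sqrt_mul (sq_nonneg q), Real.sqrt_sq hq.le]
    rw [h1, hD1def]
    apply Real.sqrt_le_sqrt
    nlinarith
  rw [gt_iff_lt, div_lt_div_iff₀ hD2 hD1] at ht
  -- ht : √n * (pZ * (cZ - pY)) * D1 < √n * ((pZ*q) * (cX - pY)) * D2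
  have hpos : 0 ≤ Real.sqrt n * pZ * (cZ - pY) :=
    mul_nonneg (by positivity) (by linarith)
  have h3 : Real.sqrt n * pZ * (cZ - pY) * (q * D2) ≤
      Real.sqrt n * pZ * (cZ - pY) * D1 :=
    mul_le_mul_of_nonneg_left hqD hpos
  have hfac : 0 < Real.sqrt n * pZ * q * D2 := by positivity
  have hlt : cZ - pY < cX - pY := by nlinarith
  constructor <;> linarith
end

section
/- Suppose t(X,Y) = K for a fixed K > 0, i.e. d = K·√(P(X)P(Y)(1 - P(X)P(Y))/n). Then φ(X,Y) = K·√(1 - P(X)P(Y)) / √(n·(1-P(X))(1-P(Y))). Consequently, if P(X) ≤ p and P(Y) ≤ p for some fixed p < 1, then φ(X,Y) ≤ K·√(1+p)/√(n·(1-p)), which tends to 0 as n → ∞. -/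
/-- If `t(X,Y) = K`, i.e. `d = K√(P(X)P(Y)(1-P(X)P(Y))/n)`, then
`φ(X,Y) = K√(1-P(X)P(Y))/√(n(1-P(X))(1-P(Y)))`; hence if `P(X),P(Y) ≤ p < 1`
then `φ(X,Y) ≤ K√(1+p)/√(n(1-p))`, which tends to `0` as `n → ∞`. -/
theorem significant_rule_small_phi (x y n K d : ℝ)
    (hx : 0 < x) (hx1 : x < 1) (hy : 0 < y) (hy1 : y < 1)
    (hn : 0 < n) (hK : 0 < K)
    (hd : d = K * Real.sqrt (x * y * (1 - x * y) / n)) :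
    d / Real.sqrt (x * (1 - x) * y * (1 - y))
      = K * Real.sqrt (1 - x * y) / Real.sqrt (n * (1 - x) * (1 - y)) ∧
    (∀ p : ℝ, x ≤ p → y ≤ p → p < 1 →
      d / Real.sqrt (x * (1 - x) * y * (1 - y))
        ≤ K * Real.sqrt (1 + p) / Real.sqrt (n * (1 - p))) ∧
    (∀ p : ℝ, p < 1 →
      Filter.Tendsto (fun m : ℝ => K * Real.sqrt (1 + p) / Real.sqrt (m * (1 - p)))
        Filter.atTop (nhds 0)) := by
  have hxy1 : 0 < 1 - x * y := by nlinarith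
  have hxy : 0 ≤ x * y * (1 - x * y) / n := by positivity
  have heq : d / Real.sqrt (x * (1 - x) * y * (1 - y))
      = K * Real.sqrt (1 - x * y) / Real.sqrt (n * (1 - x) * (1 - y)) := by
    have hrad : (x * y * (1 - x * y) / n) / (x * (1 - x) * y * (1 - y))
        = (1 - x * y) / (n * (1 - x) * (1 - y)) := by
      have h1 : (1:ℝ) - x ≠ 0 := by linarith
      have h2 : (1:ℝ) - y ≠ 0 := by linarith
      field_simp
    rw [hd, mul_div_assoc, ← Real.sqrt_div hxy, hrad,
      Real.sqrt_div hxy1.le, mul_div_assoc]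
  refine ⟨heq, ?_, ?_⟩
  · intro p hxp hyp hp1
    rw [heq]
    have h1 : (0:ℝ) < Real.sqrt (n * (1 - x) * (1 - y)) :=
      Real.sqrt_pos.2 (mul_pos (mul_pos hn (by linarith)) (by linarith))
    have h2 : (0:ℝ) < Real.sqrt (n * (1 - p)) :=
      Real.sqrt_pos.2 (mul_pos hn (by linarith))
    rw [div_le_div_iff₀ h1 h2]
    have key : Real.sqrt (1 - x * y) * Real.sqrt (n * (1 - p))
        ≤ Real.sqrt (1 + p) * Real.sqrt (n * (1 - x) * (1 - y)) := by
      rw [← Real.sqrt_mul hxy1.le, ← Real.sqrt_mul (by nlinarith : (0:ℝ) ≤ 1 + p)]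
      apply Real.sqrt_le_sqrt
      nlinarith [mul_nonneg (sub_nonneg.2 hxp) (sub_nonneg.2 hy1.le),
        mul_nonneg (sub_nonneg.2 hyp) (sub_nonneg.2 hx1.le)]
    calc K * Real.sqrt (1 - x * y) * Real.sqrt (n * (1 - p))
        = K * (Real.sqrt (1 - x * y) * Real.sqrt (n * (1 - p))) := by ring
      _ ≤ K * (Real.sqrt (1 + p) * Real.sqrt (n * (1 - x) * (1 - y))) :=
          mul_le_mul_of_nonneg_left key hK.le
      _ = K * Real.sqrt (1 + p) * Real.sqrt (n * (1 - x) * (1 - y)) := by ring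
  · intro p hp1
    apply Filter.Tendsto.div_atTop tendsto_const_nhds
    have hsq : Filter.Tendsto Real.sqrt Filter.atTop Filter.atTop := by
      apply Filter.tendsto_atTop_atTop.2
      intro b
      refine ⟨b ^ 2, fun a ha => ?_⟩
      calc b ≤ |b| := le_abs_self b
        _ = Real.sqrt (b ^ 2) := (Real.sqrt_sq_eq_abs b).symm
        _ ≤ Real.sqrt a := Real.sqrt_le_sqrt ha
    have hmul : Filter.Tendsto (fun m : ℝ => m * (1 - p)) Filter.atTop Filter.atTop :=
      Filter.Tendsto.atTop_mul_const (r := 1 - p) (by linarith) Filter.tendsto_id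
    exact hsq.comp hmul
end

section
/- Let 0 < ε < 1, n > 0, P(X) = P(Y) = 1 - ε, and d = ε(1-ε). Then the χ²-statistic χ² = n·d²/(P(X)(1-P(X))P(Y)(1-P(Y))) equals n, while t(X→Y) = √n·d/√(P(X)P(Y)(1-P(X)P(Y))) = √(nε)/√(2-ε), which tends to 0 as ε → 0 (for fixed n). Moreover t(¬X→¬Y) = √n·d/√((1-P(X))(1-P(Y))(1-(1-P(X))(1-P(Y)))) = √n·ε(1-ε)/(ε·√(1-ε²)) = √n·(1-ε)/√(1-ε²) = √(n(1-ε))/√(1+ε). -/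
/-- With `P(X) = P(Y) = 1-ε` and `d = ε(1-ε)`: `χ² = n`, while
`t(X→Y) = √(nε)/√(2-ε)` (which tends to 0 as `ε → 0`) and
`t(¬X→¬Y) = √(n(1-ε))/√(1+ε)`. -/
theorem chi_sq_from_complement_rule (ε n : ℝ) (hε : 0 < ε) (hε1 : ε < 1)
    (hn : 0 < n) :
    n * (ε * (1 - ε)) ^ 2 /
        ((1 - ε) * (1 - (1 - ε)) * (1 - ε) * (1 - (1 - ε))) = n ∧
    Real.sqrt n * (ε * (1 - ε)) /
        Real.sqrt ((1 - ε) * (1 - ε) * (1 - (1 - ε) * (1 - ε)))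
      = Real.sqrt (n * ε) / Real.sqrt (2 - ε) ∧
    Real.sqrt n * (ε * (1 - ε)) /
        Real.sqrt ((1 - (1 - ε)) * (1 - (1 - ε)) *
          (1 - (1 - (1 - ε)) * (1 - (1 - ε))))
      = Real.sqrt (n * (1 - ε)) / Real.sqrt (1 + ε) ∧
    Filter.Tendsto (fun e : ℝ => Real.sqrt (n * e) / Real.sqrt (2 - e))
      (nhdsWithin 0 (Set.Ioi 0)) (nhds 0) := by
  have h1 : (0:ℝ) < 1 - ε := by linarith
  have h2 : (0:ℝ) < 2 - ε := by linarith
  have h3 : (0:ℝ) < 1 + ε := by linarith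
  refine ⟨?_, ?_, ?_, ?_⟩
  · field_simp
    rw [show (1:ℝ) - (1 - ε) = ε by ring]
    exact div_self (by positivity)
  · have e1 : (1 - ε) * (1 - ε) * (1 - (1 - ε) * (1 - ε)) = (1-ε)^2 * (ε * (2-ε)) := by ring
    rw [e1, Real.sqrt_mul (sq_nonneg _), Real.sqrt_sq h1.le, Real.sqrt_mul hε.le,
      Real.sqrt_mul hn.le]
    have hsε : Real.sqrt ε * Real.sqrt ε = ε := Real.mul_self_sqrt hε.le
    rw [div_eq_div_iff (by positivity) (by positivity)]
    linear_combination (-(Real.sqrt n) * (1-ε) * Real.sqrt (2-ε)) * hsε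
  · have e1 : (1 - (1 - ε)) * (1 - (1 - ε)) * (1 - (1 - (1 - ε)) * (1 - (1 - ε)))
        = ε^2 * ((1-ε) * (1+ε)) := by ring
    rw [e1, Real.sqrt_mul (sq_nonneg _), Real.sqrt_sq hε.le, Real.sqrt_mul h1.le,
      Real.sqrt_mul hn.le]
    have hs : Real.sqrt (1-ε) * Real.sqrt (1-ε) = 1-ε := Real.mul_self_sqrt h1.le
    rw [div_eq_div_iff (by positivity) (by positivity)]
    linear_combination (-(Real.sqrt n) * ε * Real.sqrt (1+ε)) * hs
  · have : Filter.Tendsto (fun e : ℝ => Real.sqrt (n * e) / Real.sqrt (2 - e))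
        (nhds 0) (nhds 0) := by
      have hc : ContinuousAt (fun e : ℝ => Real.sqrt (n * e) / Real.sqrt (2 - e)) 0 := by
        apply ContinuousAt.div
        · exact (Real.continuous_sqrt.comp (continuous_const.mul continuous_id)).continuousAt
        · exact (Real.continuous_sqrt.comp (continuous_const.sub continuous_id)).continuousAt
        · simp [Real.sqrt_eq_zero']
      simpa using hc.tendsto
    exact this.mono_left nhdsWithin_le_nhds
end
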